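/- Let f(t,t_1,t_x) = t_x + e^{(t+t_1)/2}. For any function F(t,t_1,t_2) of the form F = φ(t_1 − t) + φ(t_1 − t_2) with φ(s) = e^{s/2}, the total derivative D_x F = t_x F_t + f F_{t_1} + (Df) F_{t_2}, where Df = f + e^{(t_1+t_2)/2} = t_x + e^{(t+t_1)/2} + e^{(t_1+t_2)/2}, vanishes identically in (t,t_1,t_2,t_x). -/
import Mathlib

noncomputable section

/-- `F(t,t₁,t₂) = e^{(t₁−t)/2} + e^{(t₁−t₂)/2}`. -/
def FAS (t t1 t2 : ℝ) : ℝ := Real.exp ((t1 - t) / 2) + Real.exp ((t1 - t2) / 2)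

/-- The Adler–Startsev right-hand side `f(t,t₁,t_x) = t_x + e^{(t+t₁)/2}`. -/
def fAS (t t1 tx : ℝ) : ℝ := tx + Real.exp ((t + t1) / 2)

lemma d1 (t t1 t2 : ℝ) :
    deriv (fun s => FAS s t1 t2) t = -(1/2) * Real.exp ((t1 - t) / 2) := by
  have h : HasDerivAt (fun s : ℝ => FAS s t1 t2)
      (Real.exp ((t1 - t) / 2) * (-1/2) + 0) t := by
    unfold FAS
    exact (((hasDerivAt_id t).const_sub t1).div_const 2).exp.add (hasDerivAt_const _ _)
  rw [h.deriv]; ring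

lemma d2 (t t1 t2 : ℝ) :
    deriv (fun s => FAS t s t2) t1
      = (1/2) * (Real.exp ((t1 - t) / 2) + Real.exp ((t1 - t2) / 2)) := by
  have h : HasDerivAt (fun s : ℝ => FAS t s t2)
      (Real.exp ((t1 - t) / 2) * (1/2) + Real.exp ((t1 - t2) / 2) * (1/2)) t1 := by
    unfold FAS
    exact ((((hasDerivAt_id t1).sub_const t).div_const 2).exp).add
      ((((hasDerivAt_id t1).sub_const t2).div_const 2).exp)
  rw [h.deriv]; ring

lemma d3 (t t1 t2 : ℝ) :
    deriv (fun s => FAS t t1 s) t2 = -(1/2) * Real.exp ((t1 - t2) / 2) := by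
  have h : HasDerivAt (fun s : ℝ => FAS t t1 s)
      (0 + Real.exp ((t1 - t2) / 2) * (-1/2)) t2 := by
    unfold FAS
    exact (hasDerivAt_const _ _).add (((hasDerivAt_id t2).const_sub t1).div_const 2).exp
  rw [h.deriv]; ring

/-- the total derivative `D_x F = t_x F_t + f F_{t₁} + (Df) F_{t₂}` vanishes
identically, where `Df = t_x + e^{(t+t₁)/2} + e^{(t₁+t₂)/2}`. -/
theorem AdlerStartsev_total_derivative_vanishes (t t1 t2 tx : ℝ) :
    tx * deriv (fun s => FAS s t1 t2) t
      + fAS t t1 tx * deriv (fun s => FAS t s t2) t1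
      + (fAS t t1 tx + Real.exp ((t1 + t2) / 2)) * deriv (fun s => FAS t t1 s) t2 = 0 := by
  rw [d1, d2, d3]
  unfold fAS
  have h1 : Real.exp ((t + t1) / 2) * Real.exp ((t1 - t) / 2) = Real.exp t1 := by
    rw [← Real.exp_add]; ring_nf
  have h2 : Real.exp ((t1 + t2) / 2) * Real.exp ((t1 - t2) / 2) = Real.exp t1 := by
    rw [← Real.exp_add]; ring_nf
  nlinarith [h1, h2]
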